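/- arXiv:1904.09517 — 4 statements merged into one kernel-verified Lean document; each statement's English description precedes it below -/
import Mathlib

section
/- Let D be a central division algebra of dimension d² over a local or global field F and g a regular semisimple element of GL_n(D). Then the reduced characteristic polynomial P_g of g is d-compatible: every irreducible factor of P_g in F[X] has degree divisible by d. -/
/-!
Write `P = Q * R` with `Q` irreducible; separability gives `Q ∤ R`, so `Q ^ (n * d)` and
`R ^ (n * d)` are coprime factors of the characteristic polynomial of left multiplication `L` by
`g` on `Mₙ(D)`. The primary component `ker (Q ^ (n * d))(L)` then has `F`-dimension
`n * d * deg Q`. On the other hand it is the left annihilator of `a = Q(g) ^ (n * d)`, which splits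
column by column into `n` copies of a right `D`-subspace of `Dⁿ`, so its dimension is divisible by
`n * d²`.
-/

open Polynomial Module LinearMap

namespace Polynomial

theorem isUnit_aeval_of_isCoprime {R A : Type*} [CommRing R] [Ring A] [Algebra R A] (a : A)
    {p q : R[X]} (hpq : IsCoprime p q) (hq : aeval a q = 0) : IsUnit (aeval a p) := by
  obtain ⟨u, v, huv⟩ := hpq
  have hup : aeval a u * aeval a p = 1 := by
    simpa [hq] using congrArg (aeval a) huv
  refine isUnit_iff_exists.mpr ⟨aeval a u, ?_, hup⟩
  rw [← map_mul, mul_comm, map_mul, hup]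

theorem aeval_mulLeft {F A : Type*} [CommRing F] [Ring A] [Algebra F A] (a : A) (p : F[X]) :
    aeval (LinearMap.mulLeft F a) p = LinearMap.mulLeft F (aeval a p) :=
  aeval_algHom_apply (Algebra.lmul F A) a p

end Polynomial

namespace Matrix

variable {F : Type*} [Field F] {ι : Type*} [Fintype ι] [DecidableEq ι]

theorem not_isUnit_aeval_of_dvd_charpoly (A : Matrix ι ι F) {Q : F[X]} (hQ : 0 < Q.natDegree)
    (hQA : Q ∣ A.charpoly) : ¬IsUnit (aeval A Q) := by
  let φ := algebraMap F (AlgebraicClosure F)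
  obtain ⟨μ, hμ⟩ := IsAlgClosed.exists_root (Q.map φ)
    (by rw [degree_map]; exact (natDegree_pos_iff_degree_pos.mp hQ).ne')
  have hspec : μ ∈ spectrum _ (A.map φ) := by
    rw [mem_spectrum_iff_isRoot_charpoly, charpoly_map]
    exact hμ.dvd (map_dvd φ hQA)
  have h0 : (0 : AlgebraicClosure F) ∈ spectrum _ (aeval (A.map φ) (Q.map φ)) :=
    spectrum.subset_polynomial_aeval _ _ ⟨μ, hspec, hμ⟩
  rw [spectrum.zero_mem_iff, aeval_map_algebraMap,
    show A.map φ = (Algebra.ofId F _).mapMatrix A from rfl, aeval_algHom_apply] at h0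
  exact fun hu => h0 (hu.map _)

end Matrix

namespace Module.End

section CommRing

variable {R M : Type*} [CommRing R] [AddCommGroup M] [Module R M]

theorem mapsTo_ker_aeval (f : End R M) (p : R[X]) :
    ∀ x ∈ ker (aeval f p), f x ∈ ker (aeval f p) := by
  intro x hx
  rw [mem_ker] at hx ⊢
  have hcomm : aeval f p * f = f * aeval f p := by
    simpa using ((commute_X p).map (aeval f)).eq.symm
  rw [← mul_apply, hcomm, mul_apply, hx, map_zero]

theorem aeval_restrict_apply (f : End R M) {U : Submodule R M} (hU : ∀ x ∈ U, f x ∈ U)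
    (p : R[X]) (x : U) : (aeval (f.restrict hU) p x : M) = aeval f p x := by
  induction p using Polynomial.induction_on' with
  | add p q hp hq => simp [hp, hq]
  | monomial k a =>
    rw [aeval_monomial, aeval_monomial, mul_apply, mul_apply, algebraMap_end_apply,
      algebraMap_end_apply, pow_restrict, Submodule.coe_smul, coe_restrict_apply]

theorem aeval_restrict_ker_aeval (f : End R M) (p : R[X]) :
    aeval (f.restrict (mapsTo_ker_aeval f p)) p = 0 :=
  LinearMap.ext fun x => Subtype.ext <| (aeval_restrict_apply f _ p x).trans x.2

end CommRing

variable {F V : Type*} [Field F] [AddCommGroup V] [Module F V] [FiniteDimensional F V]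

theorem not_isUnit_aeval_of_dvd_charpoly (f : End F V) {Q : F[X]} (hQ : 0 < Q.natDegree)
    (hQf : Q ∣ f.charpoly) : ¬IsUnit (aeval f Q) := by
  let b := Free.chooseBasis F V
  refine fun hu => Matrix.not_isUnit_aeval_of_dvd_charpoly (toMatrix b b f) hQ
    (by rwa [charpoly_toMatrix]) ?_
  convert hu.map (toMatrixAlgEquiv b) using 1
  exact aeval_algHom_apply (toMatrixAlgEquiv b).toAlgHom f Q

theorem isCoprime_charpoly_of_aeval_eq_zero (f : End F V) {p q : F[X]} (hpq : IsCoprime p q)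
    (hp : aeval f p = 0) : IsCoprime f.charpoly q := by
  refine isCoprime_of_irreducible_dvd (fun h => (charpoly_monic f).ne_zero h.1)
    fun T hT hTf hTq => hT.not_isUnit (hpq.isUnit_of_dvd' ?_ hTq)
  by_contra hTp
  exact not_isUnit_aeval_of_dvd_charpoly f hT.natDegree_pos hTf
    (isUnit_aeval_of_isCoprime f (hT.coprime_iff_not_dvd.mpr hTp) hp)

theorem charpoly_eq_mul_of_isCompl (f : End F V) {U U' : Submodule F V} (h : IsCompl U U')
    (hU : ∀ x ∈ U, f x ∈ U) (hU' : ∀ x ∈ U', f x ∈ U') :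
    f.charpoly = (f.restrict hU).charpoly * (f.restrict hU').charpoly := by
  let e := Submodule.prodEquivOfIsCompl U U' h
  have hconj : e.conj ((f.restrict hU).prodMap (f.restrict hU')) = f := by
    ext x
    obtain ⟨⟨u, u'⟩, rfl⟩ := e.surjective x
    simp [e, LinearEquiv.conj_apply]
  rw [← charpoly_prodMap, ← e.charpoly_conj, hconj]

theorem finrank_ker_aeval_eq_natDegree (f : End F V) {p q : F[X]} (hpq : IsCoprime p q)
    (hf : f.charpoly = p * q) : finrank F (ker (aeval f p)) = p.natDegree := by
  have hpq0 : p * q ≠ 0 := hf ▸ (charpoly_monic f).ne_zero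
  have hcompl : IsCompl (ker (aeval f p)) (ker (aeval f q)) := by
    refine ⟨disjoint_ker_aeval_of_isCoprime f hpq, codisjoint_iff.mpr ?_⟩
    rw [sup_ker_aeval_eq_ker_aeval_mul_of_coprime f hpq, ← hf, aeval_self_charpoly, ker_zero]
  set f₁ := f.restrict (mapsTo_ker_aeval f p)
  set f₂ := f.restrict (mapsTo_ker_aeval f q)
  have hχ : f₁.charpoly * f₂.charpoly = p * q := by
    rw [← hf, charpoly_eq_mul_of_isCompl f hcompl]
  have h₁ : f₁.charpoly ∣ p :=
    (isCoprime_charpoly_of_aeval_eq_zero f₁ hpq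
      (aeval_restrict_ker_aeval f p)).dvd_of_dvd_mul_right (hχ ▸ dvd_mul_right _ _)
  have h₂ : f₂.charpoly ∣ q :=
    (isCoprime_charpoly_of_aeval_eq_zero f₂ hpq.symm
      (aeval_restrict_ker_aeval f q)).dvd_of_dvd_mul_left (hχ ▸ dvd_mul_left _ _)
  have hdeg₁ := natDegree_le_of_dvd h₁ (left_ne_zero_of_mul hpq0)
  have hdeg₂ := natDegree_le_of_dvd h₂ (right_ne_zero_of_mul hpq0)
  have hdeg := congrArg natDegree hχ
  rw [natDegree_mul (charpoly_monic f₁).ne_zero (charpoly_monic f₂).ne_zero,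
    natDegree_mul (left_ne_zero_of_mul hpq0) (right_ne_zero_of_mul hpq0)] at hdeg
  rw [← charpoly_natDegree f₁]
  omega

end Module.End

namespace Matrix

variable {F D : Type*} [Field F] [DivisionRing D] [Algebra F D] {ι : Type*} [Fintype ι]

theorem mul_eq_zero_iff_forall_mulVec_transpose (a x : Matrix ι ι D) :
    a * x = 0 ↔ ∀ j, a *ᵥ xᵀ j = 0 := by
  constructor
  · intro h j
    ext i
    exact congrFun (congrFun h i) j
  · intro h
    ext i j
    exact congrFun (h j) i

def kerMulLeftEquiv (a : Matrix ι ι D) :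
    ker (LinearMap.mulLeft F a) ≃ₗ[F] (ι → ker (mulVecBilin F Dᵐᵒᵖ a)) where
  toFun x j :=
    ⟨(x : Matrix ι ι D)ᵀ j, (mul_eq_zero_iff_forall_mulVec_transpose a x).1 x.2 j⟩
  invFun v := ⟨(of fun j => (v j : ι → D))ᵀ,
    (mul_eq_zero_iff_forall_mulVec_transpose a _).2 fun j => (v j).2⟩
  map_add' _ _ := rfl
  map_smul' _ _ := rfl
  left_inv _ := rfl
  right_inv _ := rfl

theorem card_mul_finrank_dvd_finrank_ker_mulLeft [FiniteDimensional F D] (a : Matrix ι ι D) :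
    Fintype.card ι * finrank F D ∣ finrank F (ker (LinearMap.mulLeft F a)) := by
  set W := ker (mulVecBilin F Dᵐᵒᵖ a)
  have : Module.Finite F W :=
    .equiv ((W.restrictScalarsEquiv F Dᵐᵒᵖ (ι → D)).restrictScalars F)
  rw [(kerMulLeftEquiv a).finrank_eq, finrank_pi_fintype, Finset.sum_const, Finset.card_univ,
    smul_eq_mul, (MulOpposite.opLinearEquiv F).finrank_eq]
  exact mul_dvd_mul_left _ (finrank_dvd_finrank_right F Dᵐᵒᵖ W)

end Matrix

theorem stmt_6_general {F D : Type*} [Field F] [DivisionRing D] [Algebra F D]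
    [FiniteDimensional F D]
    (d : ℕ) (hd : 0 < d) (hdim : Module.finrank F D = d ^ 2)
    (n : ℕ) (hn : 0 < n)
    (g : Matrix (Fin n) (Fin n) D)
    (P : F[X]) (hsep : P.Separable)
    (hPchar : P ^ (n * d) = (LinearMap.mulLeft F g).charpoly) :
    ∀ Q : F[X], Irreducible Q → Q ∣ P → d ∣ Q.natDegree := by
  rintro Q hQ ⟨R, rfl⟩
  have hcop : IsCoprime (Q ^ (n * d)) (R ^ (n * d)) :=
    (hQ.coprime_iff_not_dvd.mpr fun hQR =>
      hQ.not_isUnit (hsep.squarefree Q (mul_dvd_mul_left Q hQR))).pow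
  have hker := End.finrank_ker_aeval_eq_natDegree _ hcop (by rw [← hPchar, mul_pow])
  rw [aeval_mulLeft, natDegree_pow] at hker
  have hdvd := Matrix.card_mul_finrank_dvd_finrank_ker_mulLeft (F := F) (aeval g (Q ^ (n * d)))
  rw [hker, Fintype.card_fin, hdim, sq, ← mul_assoc] at hdvd
  exact Nat.dvd_of_mul_dvd_mul_left (by positivity) hdvd

/-- Let `D` be a central division algebra of dimension `d²` over `F` and `g` a regular
semisimple element of `GLₙ(D)`: `g` is invertible and its reduced characteristic polynomial
`P` (the monic polynomial with `P ^ (n·d)` equal to the characteristic polynomial of left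
multiplication by `g`) has simple roots, i.e. is separable.  Then `P` is `d`-compatible:
every irreducible factor of `P` in `F[X]` has degree divisible by `d`. -/
theorem stmt_6 {F D : Type*} [Field F] [DivisionRing D] [Algebra F D]
    [FiniteDimensional F D] [Algebra.IsCentral F D]
    (d : ℕ) (hd : 0 < d) (hdim : Module.finrank F D = d ^ 2)
    (n : ℕ) (hn : 0 < n)
    (g : Matrix (Fin n) (Fin n) D) (hg : IsUnit g)
    (P : F[X]) (hP : P.Monic) (hsep : P.Separable)
    (hPchar : P ^ (n * d) = (LinearMap.mulLeft F g).charpoly) :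
    ∀ Q : F[X], Irreducible Q → Q ∣ P → d ∣ Q.natDegree :=
  stmt_6_general d hd hdim n hn g P hsep hPchar
end

section
/- Let g = (g₁,…,g_k) be an element of the standard Levi subgroup L of G = GL_n(D) with each gᵢ regular semisimple in GL_{nᵢ}(D). Then the centralizer of g in L equals the centralizer in G of some regular semisimple element of G, namely of g + ε for a suitable central element ε of L; in particular this centralizer is a maximal torus of G. -/
open Polynomial

/-- Regular semisimple of rank `N`: invertible with separable minimal polynomial of
degree `N` (equivalently, the reduced characteristic polynomial has simple roots). -/
def IsRegSemisimple (F : Type*) [Field F] {A : Type*} [Ring A] [Algebra F A]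
    (N : ℕ) (a : A) : Prop :=
  IsUnit a ∧ (minpoly F a).Separable ∧ (minpoly F a).natDegree = N


lemma Commute.aeval_poly {R A : Type*} [CommSemiring R] [Semiring A] [Algebra R A] {a y : A}
    (h : Commute a y) (p : R[X]) : Commute (Polynomial.aeval a p) y := by
  induction p using Polynomial.induction_on' with
  | add p q hp hq => rw [map_add]; exact hp.add_left hq
  | monomial n c =>
      rw [Polynomial.aeval_monomial]
      exact Commute.mul_left (Algebra.commutes c y) (h.pow_left n)

lemma isIntegral_sub_algebraMap' {A B : Type*} [Field A] [Ring B] [Algebra A B] {y : B}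
    (h : IsIntegral A y) (a : A) : IsIntegral A (y - algebraMap A B a) := by
  obtain ⟨p, pm, hp⟩ := h
  refine ⟨p.comp (X + C a), pm.comp_X_add_C a, ?_⟩
  rw [← aeval_def] at hp ⊢
  rw [aeval_comp]
  simpa using hp

theorem minpoly_add_algebraMap' {A B : Type*} [Field A] [Ring B] [Algebra A B] (x : B)
    (a : A) : minpoly A (x + algebraMap A B a) = (minpoly A x).comp (X - C a) := by
  by_cases hx : IsIntegral A x
  · refine (minpoly.unique _ _ ((minpoly.monic hx).comp_X_sub_C _) ?_ fun q qmo hq => ?_).symm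
    · simp [aeval_comp]
    · have : (Polynomial.aeval x) (q.comp (X + C a)) = 0 := by simpa [aeval_comp] using hq
      have H := minpoly.min A x (qmo.comp_X_add_C _) this
      rw [degree_eq_natDegree qmo.ne_zero,
        degree_eq_natDegree ((minpoly.monic hx).comp_X_sub_C _).ne_zero, natDegree_comp,
        natDegree_X_sub_C, mul_one]
      rwa [degree_eq_natDegree (minpoly.ne_zero hx),
        degree_eq_natDegree (qmo.comp_X_add_C _).ne_zero, natDegree_comp,
        natDegree_X_add_C, mul_one] at H
  · rw [minpoly.eq_zero hx, minpoly.eq_zero, zero_comp]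
    refine fun h ↦ hx ?_
    simpa only [add_sub_cancel_right] using isIntegral_sub_algebraMap' h a

lemma isUnit_of_minpoly_eval_zero_ne_zero {F A : Type*} [Field F] [Ring A] [Algebra F A]
    (a : A) (h : (minpoly F a).eval 0 ≠ 0) : IsUnit a := by
  set p := minpoly F a with hpdef
  have hc : p.coeff 0 = p.eval 0 := coeff_zero_eq_eval_zero p
  have key : p.divX * X + C (p.coeff 0) = p := divX_mul_X_add p
  have h1 : Polynomial.aeval a p = 0 := minpoly.aeval F a
  have h2 : Polynomial.aeval a p.divX * a + algebraMap F A (p.coeff 0) = 0 := by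
    have h3 := congrArg (Polynomial.aeval a) key
    rw [map_add, map_mul, aeval_X, aeval_C, h1] at h3
    exact h3
  set c := p.eval 0
  set b : A := -(c⁻¹ • Polynomial.aeval a p.divX) with hb
  have h3 : (Polynomial.aeval a) p.divX * a = -(algebraMap F A c) := by
    rw [← hc]; linear_combination (norm := noncomm_ring) h2
  have hba : b * a = 1 := by
    rw [hb, ← neg_smul, smul_mul_assoc, h3, smul_neg, neg_smul, neg_neg,
      Algebra.algebraMap_eq_smul_one, smul_smul, inv_mul_cancel₀ h, one_smul]
  have hcomm : Commute b a :=
    (((Commute.refl a).aeval_poly p.divX).smul_left c⁻¹).neg_left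
  exact ⟨⟨a, b, by rw [← hcomm.eq, hba], hba⟩, rfl⟩

lemma minpoly_eval_zero_ne_zero_of_isUnit {F A : Type*} [Field F] [Ring A] [Algebra F A]
    (a : A) (hint : IsIntegral F a) (h : IsUnit a) : (minpoly F a).eval 0 ≠ 0 := by
  intro h0
  have hX : X ∣ minpoly F a := X_dvd_iff.mpr (by rwa [coeff_zero_eq_eval_zero])
  obtain ⟨s, hs⟩ := hX
  have h1 : Polynomial.aeval a (minpoly F a) = 0 := minpoly.aeval F a
  rw [hs, map_mul, aeval_X] at h1
  have h2 : Polynomial.aeval a s = 0 := by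
    apply h.mul_left_cancel; rw [mul_zero]; exact h1
  have hdvd : minpoly F a ∣ s := minpoly.dvd F a h2
  have hs0 : s ≠ 0 := by
    intro hs0; rw [hs0, mul_zero] at hs; exact minpoly.ne_zero hint hs
  have hle := Polynomial.natDegree_le_of_dvd hdvd hs0
  rw [hs, natDegree_mul X_ne_zero hs0, natDegree_X] at hle
  omega

lemma isCoprime_of_no_common_root {F : Type*} [Field F] {p q : F[X]} (hp : p ≠ 0)
    (h : ∀ γ : AlgebraicClosure F, ¬((p.map (algebraMap F (AlgebraicClosure F))).IsRoot γ ∧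
      (q.map (algebraMap F (AlgebraicClosure F))).IsRoot γ)) :
    IsCoprime p q := by
  classical
  by_contra hc
  set g := EuclideanDomain.gcd p q with hg
  have hgu : ¬IsUnit g := fun hu => hc (EuclideanDomain.gcd_isUnit_iff.mp hu)
  have hg0 : g ≠ 0 := fun h0 => hp (EuclideanDomain.gcd_eq_zero_iff.mp h0).1
  have hdeg : (g.map (algebraMap F (AlgebraicClosure F))).degree ≠ 0 := by
    rw [degree_map]
    intro hd
    exact hgu (isUnit_iff_degree_eq_zero.mpr hd)
  obtain ⟨γ, hγ⟩ := IsAlgClosed.exists_root _ hdeg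
  have hγ' : eval γ (g.map (algebraMap F (AlgebraicClosure F))) = 0 := hγ
  refine h γ ⟨?_, ?_⟩
  · obtain ⟨c, hcc⟩ := EuclideanDomain.gcd_dvd_left p q
    rw [IsRoot.def, hcc, Polynomial.map_mul, eval_mul, hγ', zero_mul]
  · obtain ⟨c, hcc⟩ := EuclideanDomain.gcd_dvd_right p q
    rw [IsRoot.def, hcc, Polynomial.map_mul, eval_mul, hγ', zero_mul]

lemma exists_eps {F : Type*} [Field F] [Infinite F] (k : ℕ) (p : Fin k → F[X])
    (hmon : ∀ i, (p i).Monic) (h0 : ∀ i, (p i).eval 0 ≠ 0) :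
    ∃ ε : Fin k → F, (∀ i, (p i).eval (-(ε i)) ≠ 0) ∧
      ∀ i j, i ≠ j → IsCoprime ((p i).comp (X - C (ε i))) ((p j).comp (X - C (ε j))) := by
  classical
  set K := AlgebraicClosure F
  set ι : F →+* K := algebraMap F K with hι
  have hinj : Function.Injective ι := ι.injective
  set e : ℕ ↪ F := Infinite.natEmbedding F
  set f : Fin k → F := fun i => e i.val with hf
  have hfinj : Function.Injective f := fun i j hij => Fin.ext (e.injective hij)
  set P : Fin k → K[X] := fun i => (p i).map ι with hP
  have hP0 : ∀ i, P i ≠ 0 := fun i => (Polynomial.map_monic_ne_zero (hmon i))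
  set AllRoots : Finset K := (Finset.univ.biUnion fun i => (P i).roots.toFinset) ∪ {0}
    with hAR
  set FS : Finset F := Finset.univ.image f ∪ {0} with hFS
  set BadK : Finset K :=
    ((AllRoots ×ˢ AllRoots) ×ˢ (FS ×ˢ FS)).image
      (fun q : (K × K) × F × F => (q.1.1 - q.1.2) / ι (q.2.1 - q.2.2)) with hBadK
  have hbadfin : ({t : F | ι t ∈ BadK} ∪ {0}).Finite :=
    (BadK.finite_toSet.preimage (hinj.injOn)).union (Set.finite_singleton 0)
  obtain ⟨t, ht⟩ := hbadfin.infinite_compl.nonempty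
  rw [Set.mem_compl_iff, Set.mem_union, not_or] at ht
  obtain ⟨htb, ht0⟩ := ht
  have ht0' : t ≠ 0 := fun h => ht0 (by simp [h])
  have htb' : ι t ∉ BadK := htb
  -- membership helper
  have memBad : ∀ (α β : K) (a b : F), α ∈ AllRoots → β ∈ AllRoots → a ∈ FS → b ∈ FS →
      (α - β) / ι (a - b) = ι t → False := by
    intro α β a b hα hβ ha hb heq
    exact htb' (heq ▸ Finset.mem_image.mpr ⟨⟨⟨α, β⟩, ⟨a, b⟩⟩, by
      simp [Finset.mem_product, hα, hβ, ha, hb], rfl⟩)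
  have hroot_mem : ∀ (i : Fin k) (γ : K), (P i).IsRoot γ → γ ∈ AllRoots := by
    intro i γ hγ
    refine Finset.mem_union_left _ (Finset.mem_biUnion.mpr ⟨i, Finset.mem_univ i, ?_⟩)
    rw [Multiset.mem_toFinset, mem_roots (hP0 i)]
    exact hγ
  have hzero_mem : (0 : K) ∈ AllRoots := Finset.mem_union_right _ (Finset.mem_singleton_self 0)
  have hf_mem : ∀ i, f i ∈ FS := fun i =>
    Finset.mem_union_left _ (Finset.mem_image_of_mem f (Finset.mem_univ i))
  have hzf_mem : (0 : F) ∈ FS := Finset.mem_union_right _ (Finset.mem_singleton_self 0)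
  have hnoroot0 : ∀ i, ¬ (P i).IsRoot 0 := by
    intro i hr
    apply h0 i
    apply hinj
    rw [map_zero]
    have h4 : eval (ι 0) ((p i).map ι) = ι (eval 0 (p i)) := by
      rw [Polynomial.eval_map, Polynomial.eval₂_at_apply]
    rw [map_zero] at h4
    rw [← h4]
    exact hr
  refine ⟨fun i => f i * t, ?_, ?_⟩
  · intro i hev
    have hroot : (P i).IsRoot (ι (-(f i * t))) := by
      rw [IsRoot.def, hP]
      show eval (ι (-(f i * t))) ((p i).map ι) = 0
      rw [Polynomial.eval_map, Polynomial.eval₂_at_apply, hev, map_zero]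
    by_cases hfi : f i = 0
    · rw [hfi, zero_mul, neg_zero, map_zero] at hroot
      exact hnoroot0 i hroot
    · refine memBad 0 (ι (-(f i * t))) (f i) 0 hzero_mem (hroot_mem i _ hroot)
        (hf_mem i) hzf_mem ?_
      have hfi0 : ι (f i) ≠ 0 := fun hz => hfi (hinj (by rwa [map_zero]))
      rw [zero_sub, map_neg, neg_neg, sub_zero, map_mul]
      exact mul_div_cancel_left₀ _ hfi0
  · intro i j hij
    apply isCoprime_of_no_common_root ((hmon i).comp_X_sub_C _).ne_zero
    rintro γ ⟨h1, h2⟩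
    have key : ∀ (l : Fin k), (((p l).comp (X - C (f l * t))).map ι).IsRoot γ →
        (γ - ι (f l * t)) ∈ AllRoots := by
      intro l hl
      apply hroot_mem l
      rw [IsRoot.def, Polynomial.map_comp, Polynomial.map_sub, map_X, map_C,
        eval_comp, eval_sub, eval_X, eval_C] at hl
      exact hl
    have hα := key i h1
    have hβ := key j h2
    have hfij : f i - f j ≠ 0 := sub_ne_zero.mpr (fun h => hij (hfinj h))
    refine memBad _ _ (f i) (f j) hβ hα (hf_mem i) (hf_mem j) ?_
    have hι0 : ι (f i - f j) ≠ 0 := fun hz => hfij (hinj (by rwa [map_zero]))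
    have heq : (γ - ι (f j * t)) - (γ - ι (f i * t)) = ι (f i - f j) * ι t := by
      rw [← map_mul, show (f i - f j) * t = f i * t - f j * t from by ring, map_sub]
      ring
    rw [heq]
    exact mul_div_cancel_left₀ _ hι0

lemma separable_comp_X_sub_C {F : Type*} [Field F] {p : F[X]} (hp : p.Separable) (c : F) :
    (p.comp (X - C c)).Separable := by
  unfold Polynomial.Separable at hp ⊢
  rw [derivative_comp, derivative_sub, derivative_X, derivative_C, sub_zero, one_mul]
  have := hp.map (f := (Polynomial.aeval (R := F) (X - C c)).toRingHom)
  simpa [comp_eq_aeval] using this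

/-- blockDiagonal' as an algebra hom. -/
def blockDiagAlgHom (F : Type*) [CommSemiring F] {k : ℕ} (m : Fin k → ℕ) (D : Type*)
    [Semiring D] [Algebra F D] :
    (∀ i, Matrix (Fin (m i)) (Fin (m i)) D) →ₐ[F]
      Matrix ((i : Fin k) × Fin (m i)) ((i : Fin k) × Fin (m i)) D :=
  { Matrix.blockDiagonal'RingHom (fun i => Fin (m i)) D with
    commutes' := fun r => by
      show Matrix.blockDiagonal' (algebraMap F _ r) = algebraMap F _ r
      have h1 : (algebraMap F (∀ i, Matrix (Fin (m i)) (Fin (m i)) D) r)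
          = fun i => r • (1 : Matrix (Fin (m i)) (Fin (m i)) D) := by
        funext i
        rw [Pi.algebraMap_apply, Algebra.algebraMap_eq_smul_one]
      rw [h1, Algebra.algebraMap_eq_smul_one]
      have h2 : (fun i => r • (1 : Matrix (Fin (m i)) (Fin (m i)) D))
          = r • (1 : ∀ i, Matrix (Fin (m i)) (Fin (m i)) D) := rfl
      rw [h2, Matrix.blockDiagonal'_smul, Matrix.blockDiagonal'_one] }

lemma blockDiagAlgHom_apply {F : Type*} [CommSemiring F] {k : ℕ} (m : Fin k → ℕ) (D : Type*)
    [Semiring D] [Algebra F D] (w : ∀ i, Matrix (Fin (m i)) (Fin (m i)) D) :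
    blockDiagAlgHom F m D w = Matrix.blockDiagonal' w := rfl

lemma blockDiag_indicator {D : Type*} [Semiring D] {k : ℕ} (m : Fin k → ℕ)
    (i : Fin k) :
    Matrix.blockDiagonal' (fun j => if j = i then (1 : Matrix (Fin (m j)) (Fin (m j)) D) else 0)
      = Matrix.diagonal (fun s : (j : Fin k) × Fin (m j) => if s.1 = i then (1 : D) else 0) := by
  classical
  ext ⟨a, b⟩ ⟨c, e⟩
  by_cases h : a = c
  · subst h
    rw [Matrix.blockDiagonal'_apply_eq]
    by_cases hb : b = e
    · subst hb
      rw [Matrix.diagonal_apply_eq]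
      by_cases hai : a = i <;> simp [hai, Matrix.one_apply]
    · rw [Matrix.diagonal_apply_ne _ (by simp [hb])]
      by_cases hai : a = i <;> simp [hai, Matrix.one_apply, hb]
  · rw [Matrix.blockDiagonal'_apply_ne _ _ _ h,
      Matrix.diagonal_apply_ne _ (by simp [h])]

/-- Let `g = (g₁,…,g_k)` be an element of the standard block-diagonal Levi subgroup `L` of
`G = GLₙ(D)` with each block `gᵢ` regular semisimple in `GL_{mᵢ}(D)`.  Then there exists a
central element `ε = (ε₁·1,…,ε_k·1)` of `L` such that `g + ε` is regular semisimple in `G`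
and the centralizer of `g` in `L` (block-diagonal elements commuting with `g`) equals the
centralizer of `g + ε` in the full algebra; in particular this centralizer is a maximal
torus of `G` (the centralizer of a regular semisimple element). -/
theorem stmt_8 {F D : Type*} [Field F] [Infinite F] [DivisionRing D] [Algebra F D]
    [FiniteDimensional F D] [Algebra.IsCentral F D]
    (d : ℕ) (hd : 0 < d) (hdim : Module.finrank F D = d ^ 2)
    (k : ℕ) (m : Fin k → ℕ) (hm : ∀ i, 0 < m i)
    (x : ∀ i, Matrix (Fin (m i)) (Fin (m i)) D)
    (hx : ∀ i, IsRegSemisimple F (m i * d) (x i)) :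
    ∃ ε : Fin k → F,
      IsRegSemisimple F ((∑ i, m i) * d)
        (Matrix.blockDiagonal' x +
          Matrix.blockDiagonal' (fun i => ε i • (1 : Matrix (Fin (m i)) (Fin (m i)) D))) ∧
      Set.centralizer {Matrix.blockDiagonal' x} ∩
          Set.range (fun y : ∀ i, Matrix (Fin (m i)) (Fin (m i)) D =>
            Matrix.blockDiagonal' y) =
        Set.centralizer {Matrix.blockDiagonal' x +
          Matrix.blockDiagonal' (fun i => ε i • (1 : Matrix (Fin (m i)) (Fin (m i)) D))} := by
  classical
  set p : Fin k → F[X] := fun i => minpoly F (x i) with hpdef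
  have hint : ∀ i, IsIntegral F (x i) := fun i => Algebra.IsIntegral.isIntegral (x i)
  have hmon : ∀ i, (p i).Monic := fun i => minpoly.monic (hint i)
  have h0 : ∀ i, (p i).eval 0 ≠ 0 := fun i =>
    minpoly_eval_zero_ne_zero_of_isUnit (x i) (hint i) (hx i).1
  obtain ⟨ε, hev, hcop⟩ := exists_eps k p hmon h0
  set z : ∀ i, Matrix (Fin (m i)) (Fin (m i)) D :=
    fun i => x i + ε i • (1 : Matrix (Fin (m i)) (Fin (m i)) D) with hzdef
  have hz_alg : ∀ i, z i = x i + algebraMap F (Matrix (Fin (m i)) (Fin (m i)) D) (ε i) := by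
    intro i
    rw [Algebra.algebraMap_eq_smul_one]
  set q : Fin k → F[X] := fun i => (p i).comp (X - C (ε i)) with hqdef
  have hq_min : ∀ i, minpoly F (z i) = q i := by
    intro i
    rw [hz_alg i, minpoly_add_algebraMap']
  have hqmon : ∀ i, (q i).Monic := fun i => (hmon i).comp_X_sub_C _
  set Φ := blockDiagAlgHom F m D with hΦ
  have hΦinj : Function.Injective Φ := Matrix.blockDiagonal'_injective
  set g' := Matrix.blockDiagonal' z with hg'
  have hg'Φ : g' = Φ z := rfl
  have hsum : Matrix.blockDiagonal' x + Matrix.blockDiagonal'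
      (fun i => ε i • (1 : Matrix (Fin (m i)) (Fin (m i)) D)) = g' := by
    rw [hg', hzdef, ← Matrix.blockDiagonal'_add]
    rfl
  have hzint : IsIntegral F z := Algebra.IsIntegral.isIntegral z
  have haeval_pi : ∀ (r : F[X]) (i : Fin k),
      Polynomial.aeval (z i) r = (Polynomial.aeval z r) i := fun r i =>
    Polynomial.aeval_algHom_apply (Pi.evalAlgHom F (fun j => Matrix (Fin (m j)) (Fin (m j)) D) i)
      z r
  have hq_dvd : ∀ i, q i ∣ minpoly F z := by
    intro i
    rw [← hq_min i]
    apply minpoly.dvd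
    rw [haeval_pi, minpoly.aeval, Pi.zero_apply]
  have hq_ann : ∀ i, Polynomial.aeval (z i) (q i) = 0 := by
    intro i
    rw [← hq_min i]
    exact minpoly.aeval F (z i)
  have hprod_ann : Polynomial.aeval z (∏ i, q i) = 0 := by
    funext i
    show (Polynomial.aeval z (∏ i, q i)) i = 0
    rw [← haeval_pi]
    obtain ⟨c, hc⟩ := Finset.dvd_prod_of_mem q (Finset.mem_univ i)
    rw [hc, map_mul, hq_ann i, zero_mul]
  have hminz : minpoly F z = ∏ i, q i := by
    have h1 : minpoly F z ∣ ∏ i, q i := minpoly.dvd F z hprod_ann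
    have h2 : (∏ i, q i) ∣ minpoly F z :=
      Finset.prod_dvd_of_coprime (fun i _ j _ hij => hcop i j hij) (fun i _ => hq_dvd i)
    exact Polynomial.eq_of_monic_of_associated (minpoly.monic hzint)
      (monic_prod_of_monic _ _ fun i _ => hqmon i) (associated_of_dvd_dvd h1 h2)
  have hming' : minpoly F g' = ∏ i, q i := by
    rw [hg'Φ, minpoly.algHom_eq Φ hΦinj, hminz]
  have hqnd : ∀ i, (q i).natDegree = m i * d := by
    intro i
    rw [hqdef]
    show ((p i).comp (X - C (ε i))).natDegree = m i * d
    rw [natDegree_comp, natDegree_X_sub_C, mul_one]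
    exact (hx i).2.2
  refine ⟨ε, ?_, ?_⟩
  · rw [hsum]
    refine ⟨?_, ?_, ?_⟩
    · -- IsUnit g'
      have hziu : ∀ i, IsUnit (z i) := by
        intro i
        apply isUnit_of_minpoly_eval_zero_ne_zero (F := F)
        rw [hq_min i]
        show (((p i).comp (X - C (ε i))) : F[X]).eval 0 ≠ 0
        rw [eval_comp, eval_sub, eval_X, eval_C, zero_sub]
        exact hev i
      have hzu : IsUnit z := by
        refine ⟨⟨z, fun i => ((hziu i).unit⁻¹).val, ?_, ?_⟩, rfl⟩
        · funext i
          exact (hziu i).mul_val_inv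
        · funext i
          exact (hziu i).val_inv_mul
      exact hg'Φ ▸ hzu.map Φ
    · rw [hming']
      exact Polynomial.separable_prod' (fun i _ j _ hij => hcop i j hij)
        (fun i _ => separable_comp_X_sub_C (hx i).2.1 (ε i))
    · rw [hming', Polynomial.natDegree_prod _ _ (fun i _ => (hqmon i).ne_zero)]
      rw [Finset.sum_congr rfl (fun i _ => hqnd i), ← Finset.sum_mul]
  · -- centralizer equality
    rw [hsum]
    ext y
    simp only [Set.mem_inter_iff, Set.mem_centralizer_iff, Set.mem_singleton_iff,
      forall_eq, Set.mem_range]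
    constructor
    · rintro ⟨hyg, w, rfl⟩
      have hxw : x * w = w * x := by
        apply hΦinj
        rw [map_mul, map_mul]
        exact hyg
      have hzw : z * w = w * z := by
        funext i
        show z i * w i = w i * z i
        have hxwi : x i * w i = w i * x i := congrFun hxw i
        rw [hzdef]
        show (x i + ε i • 1) * w i = w i * (x i + ε i • 1)
        rw [add_mul, mul_add, smul_mul_assoc, one_mul, mul_smul_comm, mul_one, hxwi]
      show g' * Matrix.blockDiagonal' w = Matrix.blockDiagonal' w * g'
      rw [hg'Φ]
      show Φ z * Φ w = Φ w * Φ z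
      rw [← map_mul, ← map_mul, hzw]
    · intro hyg'
      have hcomm : Commute g' y := hyg'
      -- idempotents
      have hE : ∀ i : Fin k, ∃ r : F[X], Polynomial.aeval g' r =
          Matrix.diagonal (fun s : (j : Fin k) × Fin (m j) => if s.1 = i then (1 : D) else 0) := by
        intro i
        have hco : IsCoprime (q i) (∏ j ∈ Finset.univ.erase i, q j) :=
          IsCoprime.prod_right fun j hj =>
            hcop i j (fun h => (Finset.mem_erase.mp hj).1 h.symm)
        obtain ⟨u, v, huv⟩ := hco
        refine ⟨v * ∏ j ∈ Finset.univ.erase i, q j, ?_⟩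
        have hvals : ∀ jj : Fin k,
            Polynomial.aeval (z jj) (v * ∏ j ∈ Finset.univ.erase i, q j)
              = if jj = i then 1 else 0 := by
          intro jj
          by_cases hji : jj = i
          · subst hji
            rw [if_pos rfl]
            have h5 := congrArg (Polynomial.aeval (z jj)) huv
            rw [map_add, map_one, map_mul, hq_ann jj, mul_zero, zero_add] at h5
            exact h5
          · rw [if_neg hji]
            have hmem : jj ∈ Finset.univ.erase i := Finset.mem_erase.mpr ⟨hji, Finset.mem_univ jj⟩
            obtain ⟨c, hc⟩ := Finset.dvd_prod_of_mem q hmem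
            rw [map_mul, hc, map_mul, hq_ann jj, zero_mul, mul_zero]
        rw [hg'Φ, Polynomial.aeval_algHom_apply]
        have hz_eval : Polynomial.aeval z (v * ∏ j ∈ Finset.univ.erase i, q j)
            = (fun jj => if jj = i then (1 : Matrix (Fin (m jj)) (Fin (m jj)) D) else 0) := by
          funext jj
          rw [← haeval_pi]
          exact hvals jj
        rw [hz_eval, blockDiagAlgHom_apply, blockDiag_indicator]
      have hoff : ∀ s t : (j : Fin k) × Fin (m j), s.1 ≠ t.1 → y s t = 0 := by
        intro s t hst
        obtain ⟨r, hr⟩ := hE s.1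
        have hc2 : Polynomial.aeval g' r * y = y * Polynomial.aeval g' r :=
          (hcomm.aeval_poly r).eq
        rw [hr] at hc2
        have h6 := congrArg (fun M => M s t) hc2
        simp only [Matrix.diagonal_mul, Matrix.mul_diagonal] at h6
        simp only [if_pos trivial, eq_self_iff_true, if_true, one_mul] at h6
        rw [if_neg (Ne.symm hst), mul_zero] at h6
        exact h6
      set W : ∀ i, Matrix (Fin (m i)) (Fin (m i)) D :=
        fun i => Matrix.of (fun a b => y ⟨i, a⟩ ⟨i, b⟩) with hWdef
      have hyW : Matrix.blockDiagonal' W = y := by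
        ext ⟨a, b⟩ ⟨c, e⟩
        by_cases h : a = c
        · subst h
          rw [Matrix.blockDiagonal'_apply_eq]
          rfl
        · rw [Matrix.blockDiagonal'_apply_ne _ _ _ h]
          exact (hoff ⟨a, b⟩ ⟨c, e⟩ h).symm
      have hzW : z * W = W * z := by
        apply hΦinj
        rw [map_mul, map_mul]
        show Matrix.blockDiagonal' z * Matrix.blockDiagonal' W
          = Matrix.blockDiagonal' W * Matrix.blockDiagonal' z
        rw [hyW, ← hg']
        exact hyg'
      have hxW : ∀ i, x i * W i = W i * x i := by
        intro i
        have h7 : z i * W i = W i * z i := congrFun hzW i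
        rw [hzdef] at h7
        have h8 : (x i + ε i • 1) * W i = W i * (x i + ε i • 1) := h7
        rw [add_mul, mul_add, smul_mul_assoc, one_mul, mul_smul_comm, mul_one] at h8
        exact add_right_cancel h8
      constructor
      · show Matrix.blockDiagonal' x * y = y * Matrix.blockDiagonal' x
        rw [← hyW]
        show Φ x * Φ W = Φ W * Φ x
        rw [← map_mul, ← map_mul]
        congr 1
        funext i
        exact hxW i
      · exact ⟨W, hyW⟩
end

section
/- Let (G_v)_{v∈V} be a family of abelian locally compact groups with given open compact subgroups K_v for v outside a finite set V_∞, and let G be their restricted product. If for each v a continuous character χ_v : G_v → ℂ^× is given with χ_v trivial on K_v for almost all v, then χ(g) = ∏_v χ_v(g_v) is a well-defined continuous character of G, and conversely every continuous character of G arises this way with χ_v unramified for almost all v. -/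
/-!
Near `1` the product `∏ᶠ v, χ v (g v)` only involves the finitely many places where `χ v` is
ramified or `K v` is not open, so it is locally a finite product of continuous characters.
Conversely, a continuous character `Χ` maps a basic neighbourhood `∏ N v` into the ball of
radius `1/2` about `1`, which contains no nontrivial subgroup of `ℂˣ`; hence `Χ` kills the
elements that are `1` on the finite set `S` where `N v ≠ K v` and lie in `K v` elsewhere, and
then `Χ` is the product of its restrictions `Χ ∘ Pi.mulSingle v`.
-/

open Filter Topology

/-- The restricted product of a family of groups `G v` with respect to subgroups `K v`:
the subgroup of the direct product consisting of elements whose component lies in `K v`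
for almost all `v`. -/
def restrictedProduct {V : Type*} (G : V → Type*) [∀ v, Group (G v)]
    (K : ∀ v, Subgroup (G v)) : Subgroup (∀ v, G v) where
  carrier := {g | ∀ᶠ v in cofinite, g v ∈ K v}
  one_mem' := by
    simp only [Set.mem_setOf_eq]
    exact Eventually.of_forall fun v => (K v).one_mem
  mul_mem' := by
    intro a b ha hb
    simp only [Set.mem_setOf_eq] at *
    exact (ha.and hb).mono fun v hv => (K v).mul_mem hv.1 hv.2
  inv_mem' := by
    intro a ha
    simp only [Set.mem_setOf_eq] at *
    exact ha.mono fun v hv => (K v).inv_mem hv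

/-- For `u ≠ 1` the partial geometric sums `(u ^ N - 1) / (u - 1)` stay bounded, whereas their
real parts grow like `N / 2` when every power of `u` has real part `> 1/2`. -/
theorem Complex.eq_one_of_forall_pow_mem_ball {u : ℂ}
    (h : ∀ n : ℕ, u ^ n ∈ Metric.ball (1 : ℂ) (1 / 2)) : u = 1 := by
  by_contra hu
  have hu_pos : 0 < ‖u - 1‖ := norm_pos_iff.mpr (sub_ne_zero.mpr hu)
  obtain ⟨N, hN⟩ := exists_nat_gt (1 / 2 / ‖u - 1‖ * 2)
  have hupper : ‖∑ n ∈ Finset.range N, u ^ n‖ ≤ 1 / 2 / ‖u - 1‖ := by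
    rw [geom_sum_eq hu, norm_div]
    gcongr
    exact (mem_ball_iff_norm.mp (h N)).le
  have hlower : (N : ℝ) / 2 ≤ (∑ n ∈ Finset.range N, u ^ n).re := by
    rw [Complex.re_sum]
    calc (N : ℝ) / 2 = ∑ _n ∈ Finset.range N, (1 / 2 : ℝ) := by simp; ring
      _ ≤ _ := Finset.sum_le_sum fun n _ => ?_
    have hn := (Complex.abs_re_le_norm (u ^ n - 1)).trans_lt (mem_ball_iff_norm.mp (h n))
    rw [Complex.sub_re, Complex.one_re] at hn
    linarith [(abs_lt.mp hn).1]
  linarith [Complex.re_le_norm (∑ n ∈ Finset.range N, u ^ n)]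

section Group

variable {V : Type*} {G : V → Type*} [∀ v, Group (G v)] {K : ∀ v, Subgroup (G v)}

variable (G K) in
def HasRestrictedProductNhdsBasis [∀ v, TopologicalSpace (G v)]
    [TopologicalSpace (restrictedProduct G K)] : Prop :=
  (𝓝 (1 : restrictedProduct G K)).HasBasis
    (fun N : ∀ v, Set (G v) =>
      (∀ v, N v ∈ 𝓝 (1 : G v)) ∧ ∀ᶠ v in cofinite, N v = (K v : Set (G v)))
    (fun N => {g : restrictedProduct G K | ∀ v, (g : ∀ v, G v) v ∈ N v})

namespace restrictedProduct

theorem mulSingle_mem [DecidableEq V] (v : V) (x : G v) :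
    Pi.mulSingle v x ∈ restrictedProduct G K :=
  (eventually_cofinite_ne v).mono fun w hw => by
    rw [Pi.mulSingle_eq_of_ne hw]
    exact (K w).one_mem

def eval (v : V) : restrictedProduct G K →* G v :=
  (Pi.evalMonoidHom G v).comp (restrictedProduct G K).subtype

@[simp]
theorem eval_apply (v : V) (g : restrictedProduct G K) : eval v g = (g : ∀ v, G v) v :=
  rfl

def mulSingle [DecidableEq V] (v : V) : G v →* restrictedProduct G K :=
  (MonoidHom.mulSingle G v).codRestrict _ (mulSingle_mem v)

@[simp]
theorem coe_mulSingle_apply [DecidableEq V] (v : V) (x : G v) (w : V) :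
    ((mulSingle v x : restrictedProduct G K) : ∀ v, G v) w = Pi.mulSingle v x w :=
  rfl

variable {M : Type*} [CommMonoid M]

theorem finite_mulSupport_apply {χ : ∀ v, G v →* M}
    (hχ : ∀ᶠ v in cofinite, ∀ x ∈ K v, χ v x = 1) (g : restrictedProduct G K) :
    (Function.mulSupport fun v => χ v ((g : ∀ v, G v) v)).Finite :=
  eventually_cofinite.mp <| (hχ.and g.2).mono fun _ hv => hv.1 _ hv.2

noncomputable def finprodHom (χ : ∀ v, G v →* M)
    (hχ : ∀ᶠ v in cofinite, ∀ x ∈ K v, χ v x = 1) : restrictedProduct G K →* M where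
  toFun g := ∏ᶠ v, χ v ((g : ∀ v, G v) v)
  map_one' := by simp
  map_mul' g h := by
    simp only [Subgroup.coe_mul, Pi.mul_apply, map_mul]
    exact finprod_mul_distrib (finite_mulSupport_apply hχ g) (finite_mulSupport_apply hχ h)

variable [∀ v, TopologicalSpace (G v)] [TopologicalSpace (restrictedProduct G K)]

theorem eventually_nhds_one (hbasis : HasRestrictedProductNhdsBasis G K) {Vinf : Finset V}
    (hK : ∀ v ∉ Vinf, IsOpen (K v : Set (G v))) {S : Finset V} (hS : Vinf ⊆ S)
    {U : ∀ v, Set (G v)} (hU : ∀ v ∈ S, U v ∈ 𝓝 1) :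
    ∀ᶠ g : restrictedProduct G K in 𝓝 1,
      (∀ v ∈ S, (g : ∀ v, G v) v ∈ U v) ∧ ∀ v ∉ S, (g : ∀ v, G v) v ∈ K v := by
  classical
  refine hbasis.mem_of_superset
    (i := fun v => if v ∈ S then U v else (K v : Set (G v))) ⟨fun v => ?_, ?_⟩ fun g hg => ?_
  · by_cases hv : v ∈ S
    · simpa [hv] using hU v hv
    · simp only [hv, if_false]
      exact (hK v fun h => hv (hS h)).mem_nhds (K v).one_mem
  · exact (Finset.eventually_cofinite_notMem S).mono fun v hv => if_neg hv
  · exact ⟨fun v hv => by simpa [hv] using hg v, fun v hv => by simpa [hv] using hg v⟩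

theorem continuous_eval [IsTopologicalGroup (restrictedProduct G K)]
    [∀ v, IsTopologicalGroup (G v)]
    (hbasis : HasRestrictedProductNhdsBasis G K) {Vinf : Finset V}
    (hK : ∀ v ∉ Vinf, IsOpen (K v : Set (G v))) (v : V) :
    Continuous (eval (K := K) v) := by
  classical
  refine continuous_of_continuousAt_one _ fun U hU => mem_map.mpr ?_
  rw [map_one] at hU
  filter_upwards [eventually_nhds_one hbasis hK (Finset.subset_insert v Vinf)
    (U := Function.update (fun _ => Set.univ) v U) fun w _ => by
      rcases eq_or_ne w v with rfl | hw
      · simpa using hU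
      · simp [hw]] with g hg
  simpa using hg.1 v (Finset.mem_insert_self v Vinf)

theorem continuous_mulSingle [IsTopologicalGroup (restrictedProduct G K)]
    [∀ v, IsTopologicalGroup (G v)] [DecidableEq V] (hbasis : HasRestrictedProductNhdsBasis G K)
    (v : V) : Continuous (mulSingle (K := K) v) := by
  refine continuous_of_continuousAt_one _ ?_
  rw [ContinuousAt, map_one, hbasis.tendsto_right_iff]
  rintro N ⟨hN, -⟩
  filter_upwards [hN v] with x hx w
  rcases eq_or_ne w v with rfl | hw
  · simpa using hx
  · simpa [Pi.mulSingle_eq_of_ne hw] using mem_of_mem_nhds (hN w)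

theorem continuous_finprodHom [IsTopologicalGroup (restrictedProduct G K)]
    [∀ v, IsTopologicalGroup (G v)] [TopologicalSpace M]
    [ContinuousMul M] (hbasis : HasRestrictedProductNhdsBasis G K) {Vinf : Finset V}
    (hK : ∀ v ∉ Vinf, IsOpen (K v : Set (G v))) {χ : ∀ v, G v →* M}
    (hχc : ∀ v, Continuous (χ v)) (hχ : ∀ᶠ v in cofinite, ∀ x ∈ K v, χ v x = 1) :
    Continuous (finprodHom χ hχ) := by
  classical
  set S := (eventually_cofinite.mp hχ).toFinset ∪ Vinf
  have hprod : Continuous fun g : restrictedProduct G K => ∏ v ∈ S, χ v ((g : ∀ v, G v) v) :=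
    continuous_finsetProd _ fun v _ => (hχc v).comp (continuous_eval hbasis hK v)
  refine continuous_of_continuousAt_one _ (hprod.continuousAt.congr ?_)
  filter_upwards [eventually_nhds_one hbasis hK Finset.subset_union_right
    (U := fun _ => Set.univ) fun _ _ => univ_mem] with g hg
  refine (finprod_eq_prod_of_mulSupport_subset _ fun v hv => ?_).symm
  by_contra hvS
  have hunram : ∀ x ∈ K v, χ v x = 1 := by
    by_contra h
    exact hvS (Finset.mem_union_left _ ((eventually_cofinite.mp hχ).mem_toFinset.mpr h))
  exact hv (hunram _ (hg.2 v hvS))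

theorem exists_finset_map_eq_one (hbasis : HasRestrictedProductNhdsBasis G K)
    [TopologicalSpace M] {U : Set M} (hU : U ∈ 𝓝 1)
    (hsmall : ∀ u : M, (∀ n : ℕ, u ^ n ∈ U) → u = 1)
    {Χ : restrictedProduct G K →* M} (hΧ : Continuous Χ) :
    ∃ S : Finset V, ∀ g : restrictedProduct G K, (∀ v ∈ S, (g : ∀ v, G v) v = 1) →
      (∀ v ∉ S, (g : ∀ v, G v) v ∈ K v) → Χ g = 1 := by
  obtain ⟨N, ⟨hN, hNK⟩, hNU⟩ :=
    hbasis.mem_iff.mp (hΧ.continuousAt.preimage_mem_nhds (by rwa [map_one]))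
  set S := (eventually_cofinite.mp hNK).toFinset
  refine ⟨S, fun g hgS hgK => hsmall _ fun n => ?_⟩
  rw [← map_pow]
  refine hNU fun v => ?_
  rw [SubmonoidClass.coe_pow, Pi.pow_apply]
  by_cases hv : v ∈ S
  · rw [hgS v hv, one_pow]
    exact mem_of_mem_nhds (hN v)
  · rw [show N v = K v by simpa [S] using hv]
    exact (K v).pow_mem (hgK v hv) n

end restrictedProduct

end Group

namespace restrictedProduct

variable {V : Type*} {G : V → Type*} [∀ v, CommGroup (G v)] {K : ∀ v, Subgroup (G v)}
  {M : Type*} [CommMonoid M]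

theorem map_mulSingle_eq_one [DecidableEq V] {Χ : restrictedProduct G K →* M} {S : Finset V}
    (hS : ∀ g : restrictedProduct G K, (∀ v ∈ S, (g : ∀ v, G v) v = 1) →
      (∀ v ∉ S, (g : ∀ v, G v) v ∈ K v) → Χ g = 1)
    {v : V} (hv : v ∉ S) {x : G v} (hx : x ∈ K v) : Χ (mulSingle v x) = 1 := by
  refine hS _ (fun w hw => ?_) fun w hw => ?_
  · simp [Pi.mulSingle_eq_of_ne (ne_of_mem_of_not_mem hw hv)]
  · rcases eq_or_ne w v with rfl | hwv
    · simpa using hx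
    · simp [Pi.mulSingle_eq_of_ne hwv]

/-- Write `g = k * ∏_{v ∈ T} g_v` where `T ⊇ S` contains the places with `g_v ∉ K_v`;
then `Χ k = 1`. -/
theorem map_eq_finprod_map_mulSingle [DecidableEq V] {Χ : restrictedProduct G K →* M}
    {S : Finset V}
    (hS : ∀ g : restrictedProduct G K, (∀ v ∈ S, (g : ∀ v, G v) v = 1) →
      (∀ v ∉ S, (g : ∀ v, G v) v ∈ K v) → Χ g = 1)
    (g : restrictedProduct G K) : Χ g = ∏ᶠ v, Χ (mulSingle v ((g : ∀ v, G v) v)) := by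
  set T := S ∪ (eventually_cofinite.mp g.2).toFinset
  have hgT : ∀ v ∉ T, (g : ∀ v, G v) v ∈ K v := fun v hv => by
    by_contra h
    exact hv (Finset.mem_union_right _ ((eventually_cofinite.mp g.2).mem_toFinset.mpr h))
  set gT : restrictedProduct G K := ∏ v ∈ T, mulSingle v ((g : ∀ v, G v) v)
  have hgT_apply : ∀ w, (gT : ∀ v, G v) w = if w ∈ T then (g : ∀ v, G v) w else 1 := by
    intro w
    simp [gT, Finset.prod_apply]
  have hk : Χ (g * gT⁻¹) = 1 := by
    refine hS _ (fun v hv => ?_) fun v hv => ?_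
    · have hvT : v ∈ T := Finset.mem_union_left _ hv
      simp [hgT_apply, hvT]
    · by_cases hvT : v ∈ T
      · simp [hgT_apply, hvT]
      · simpa [hgT_apply, hvT] using hgT v hvT
  calc Χ g = Χ (g * gT⁻¹) * Χ gT := by rw [← map_mul, inv_mul_cancel_right]
    _ = ∏ v ∈ T, Χ (mulSingle v ((g : ∀ v, G v) v)) := by rw [hk, one_mul, map_prod]
    _ = _ := (finprod_eq_prod_of_mulSupport_subset _ fun v hv => by_contra fun hvT =>
          hv (map_mulSingle_eq_one hS (fun h => hvT (Finset.mem_union_left _ h))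
            (hgT v hvT))).symm

end restrictedProduct

/-- Characters of a restricted product of abelian locally compact groups (with open compact
subgroups `K v` outside a finite set `Vinf`, and the restricted product topology, described
by its neighborhood base at `1`):  (a) any family of continuous characters `χ v` of the
`G v`, unramified (trivial on `K v`) for almost all `v`, defines by the product formula
`χ g = ∏ᶠ v, χ v (g v)` a continuous character of the restricted product; (b) conversely
every continuous character of the restricted product arises this way. -/
theorem stmt_10 {V : Type*} (G : V → Type*) [∀ v, CommGroup (G v)]
    [∀ v, TopologicalSpace (G v)] [∀ v, IsTopologicalGroup (G v)]
    (Vinf : Finset V) (K : ∀ v, Subgroup (G v))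
    (hK : ∀ v ∉ Vinf, IsOpen (K v : Set (G v)) ∧ IsCompact (K v : Set (G v)))
    [TopologicalSpace (restrictedProduct G K)] [IsTopologicalGroup (restrictedProduct G K)]
    (hbasis : (𝓝 (1 : restrictedProduct G K)).HasBasis
      (fun N : ∀ v, Set (G v) =>
        (∀ v, N v ∈ 𝓝 (1 : G v)) ∧ ∀ᶠ v in cofinite, N v = (K v : Set (G v)))
      (fun N => {g : restrictedProduct G K | ∀ v, (g : ∀ v, G v) v ∈ N v})) :
    (∀ χ : ∀ v, G v →* ℂˣ, (∀ v, Continuous (χ v)) →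
      (∀ᶠ v in cofinite, ∀ x ∈ K v, χ v x = 1) →
      (Continuous fun g : restrictedProduct G K => ∏ᶠ v, χ v ((g : ∀ v, G v) v)) ∧
        ∀ g h : restrictedProduct G K,
          (∏ᶠ v, χ v (((g * h : restrictedProduct G K) : ∀ v, G v) v)) =
            (∏ᶠ v, χ v ((g : ∀ v, G v) v)) * ∏ᶠ v, χ v ((h : ∀ v, G v) v)) ∧
    ∀ Χ : restrictedProduct G K →* ℂˣ, Continuous Χ →
      ∃ χ : ∀ v, G v →* ℂˣ, (∀ v, Continuous (χ v)) ∧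
        (∀ᶠ v in cofinite, ∀ x ∈ K v, χ v x = 1) ∧
        ∀ g : restrictedProduct G K, Χ g = ∏ᶠ v, χ v ((g : ∀ v, G v) v) := by
  classical
  refine ⟨fun χ hχc hχ => ⟨?_, map_mul (restrictedProduct.finprodHom χ hχ)⟩,
    fun Χ hΧ => ?_⟩
  · exact restrictedProduct.continuous_finprodHom hbasis (fun v hv => (hK v hv).1) hχc hχ
  have hball : Units.val ⁻¹' Metric.ball (1 : ℂ) (1 / 2) ∈ 𝓝 (1 : ℂˣ) :=
    Units.continuous_val.continuousAt.preimage_mem_nhds (Metric.ball_mem_nhds _ (by norm_num))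
  obtain ⟨S, hS⟩ := restrictedProduct.exists_finset_map_eq_one hbasis hball
    (fun u hu => Units.ext (Complex.eq_one_of_forall_pow_mem_ball fun n => by simpa using hu n))
    hΧ
  refine ⟨fun v => Χ.comp (restrictedProduct.mulSingle v),
    fun v => hΧ.comp (restrictedProduct.continuous_mulSingle hbasis v), ?_,
    restrictedProduct.map_eq_finprod_map_mulSingle hS⟩
  exact (Finset.eventually_cofinite_notMem S).mono fun v hv x hx =>
    restrictedProduct.map_mulSingle_eq_one hS hv hx
end

section
/- Let J be a countable index set, (c_j)_{j∈J} complex numbers with ∑_j |c_j| < ∞, and for each j a point π_j in a compact Hausdorff space R, with π_{j₁} ≠ π_{j₂} for j₁ ≠ j₂. Suppose 𝒜 is a subalgebra of C(R, ℂ) containing the constants, closed under complex conjugation, and separating points (hence dense by Stone–Weierstrass), and suppose ∑_j c_j F(π_j) = 0 for all F ∈ 𝒜. Then c_j = 0 for all j. -/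
/-!
The functional `f ↦ ∑ c_j f(π_j)` is continuous on `C(X, 𝕜)`, of norm at most `∑ ‖c_j‖`; by
Stone–Weierstrass, vanishing on the dense subalgebra forces it to vanish on every continuous
function. Testing it against a function of sup norm `1` that equals `1` at `π_i` and vanishes at
`π_j` for the finitely many `j ≠ i` in a finite set `s` gives `‖c_i‖ ≤ ∑_{j ∉ s} ‖c_j‖`, and this
tail tends to `0` as `s` grows.
-/

open Filter Set

section

variable {X : Type*} [TopologicalSpace X] {𝕜 : Type*} [RCLike 𝕜] {J : Type*}

section Compact

variable [CompactSpace X]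

theorem norm_smul_evalCLM_le (a : 𝕜) (x : X) :
    ‖a • ContinuousMap.evalCLM 𝕜 (M := 𝕜) x‖ ≤ ‖a‖ := by
  refine ContinuousLinearMap.opNorm_le_bound _ (norm_nonneg a) fun f => ?_
  simpa [norm_mul] using mul_le_mul_of_nonneg_left (f.norm_coe_le_norm x) (norm_nonneg a)

noncomputable def weightedEvalCLM (c : J → 𝕜) (π : J → X) : C(X, 𝕜) →L[𝕜] 𝕜 :=
  ∑' j, c j • ContinuousMap.evalCLM 𝕜 (π j)

theorem weightedEvalCLM_apply {c : J → 𝕜} (hc : Summable fun j => ‖c j‖) (π : J → X)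
    (f : C(X, 𝕜)) : weightedEvalCLM c π f = ∑' j, c j * f (π j) :=
  (ContinuousLinearMap.apply 𝕜 𝕜 f).map_tsum
    (hc.of_norm_bounded fun j => norm_smul_evalCLM_le (c j) (π j))

theorem ContinuousLinearMap.eq_zero_of_eqOn_starSubalgebra_separatesPoints {E : Type*}
    [TopologicalSpace E] [AddCommMonoid E] [Module 𝕜 E] [T2Space E] (L : C(X, 𝕜) →L[𝕜] E)
    (A : StarSubalgebra 𝕜 C(X, 𝕜)) (hA : A.SeparatesPoints) (hL : EqOn L 0 A) : L = 0 := by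
  have hdense : Dense (A : Set C(X, 𝕜)) := by
    rw [dense_iff_closure_eq, ← StarSubalgebra.topologicalClosure_coe,
      ContinuousMap.starSubalgebra_topologicalClosure_eq_top_of_separatesPoints A hA,
      StarSubalgebra.coe_top]
  exact ContinuousLinearMap.ext_on (hdense.mono Submodule.subset_span) hL

end Compact

theorem exists_continuousMap_eq_one_eqOn_zero [CompletelyRegularSpace X] {x : X} {K : Set X}
    (hK : IsClosed K) (hx : x ∉ K) :
    ∃ f : C(X, 𝕜), f x = 1 ∧ EqOn f 0 K ∧ ∀ y, ‖f y‖ ≤ 1 := by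
  obtain ⟨g, hg, hgx, hgK⟩ := CompletelyRegularSpace.completely_regular x K hK hx
  refine ⟨⟨fun y => ((1 - g y : ℝ) : 𝕜), by fun_prop⟩, by simp [hgx], fun y hy => by simp [hgK hy],
    fun y => ?_⟩
  rw [ContinuousMap.coe_mk, RCLike.norm_ofReal, abs_le]
  constructor <;> linarith [(g y).2.1, (g y).2.2]

theorem norm_le_tsum_compl_of_forall_tsum_mul_apply_eq_zero [T35Space X] {c : J → 𝕜}
    (hc : Summable fun j => ‖c j‖) {π : J → X} (hπ : Function.Injective π)
    (h : ∀ f : C(X, 𝕜), ∑' j, c j * f (π j) = 0) {i : J} {s : Finset J} (hi : i ∈ s) :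
    ‖c i‖ ≤ ∑' j : {j // j ∉ s}, ‖c j‖ := by
  have hK : IsClosed (π '' (↑s \ {i})) := ((s.finite_toSet.sdiff).image π).isClosed
  have hπi : π i ∉ π '' (↑s \ {i}) := fun ⟨j, ⟨_, hji⟩, hj⟩ => hji (hπ hj)
  obtain ⟨f, hfi, hfs, hf⟩ := exists_continuousMap_eq_one_eqOn_zero (𝕜 := 𝕜) hK hπi
  have hbound (j : J) : ‖c j * f (π j)‖ ≤ ‖c j‖ := by
    simpa [norm_mul] using mul_le_mul_of_nonneg_left (hf (π j)) (norm_nonneg (c j))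
  have hsummable : Summable fun j => c j * f (π j) := hc.of_norm_bounded hbound
  have hfinite : ∑ j ∈ s, c j * f (π j) = c i := by
    rw [Finset.sum_eq_single_of_mem i hi fun j hj hji => ?_, hfi, mul_one]
    rw [hfs ⟨j, ⟨hj, hji⟩, rfl⟩, Pi.zero_apply, mul_zero]
  have htail : c i = -∑' j : {j // j ∉ s}, c j * f (π j) := by
    linear_combination hsummable.sum_add_tsum_subtype_compl s + h f - hfinite
  rw [htail, norm_neg]
  refine (norm_tsum_le_tsum_norm (hsummable.subtype _).norm).trans ?_
  exact (hsummable.subtype _).norm.tsum_le_tsum (fun j => hbound j) (hc.subtype _)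

theorem eq_zero_of_forall_tsum_mul_apply_eq_zero [T35Space X] {c : J → 𝕜}
    (hc : Summable fun j => ‖c j‖) {π : J → X} (hπ : Function.Injective π)
    (h : ∀ f : C(X, 𝕜), ∑' j, c j * f (π j) = 0) (i : J) : c i = 0 := by
  refine norm_le_zero_iff.mp (ge_of_tendsto (tendsto_tsum_compl_atTop_zero fun j => ‖c j‖) ?_)
  filter_upwards [eventually_ge_atTop {i}] with s hs
  exact norm_le_tsum_compl_of_forall_tsum_mul_apply_eq_zero hc hπ h
    (Finset.singleton_subset_iff.mp hs)

end

theorem stmt_13_general {R : Type*} [TopologicalSpace R] [CompactSpace R] [T2Space R]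
    {J : Type*} (c : J → ℂ)
    (hsum : Summable fun j => ‖c j‖)
    (π : J → R) (hinj : Function.Injective π)
    (A : Subalgebra ℂ C(R, ℂ))
    (hconj : ∀ f ∈ A, star f ∈ A)
    (hsep : ∀ x y : R, x ≠ y → ∃ f ∈ A, f x ≠ f y)
    (hzero : ∀ f ∈ A, ∑' j, c j * f (π j) = 0) :
    ∀ j, c j = 0 := by
  let A' : StarSubalgebra ℂ C(R, ℂ) := { A with star_mem' := hconj _ }
  have hA' : A'.SeparatesPoints := fun x y hxy => by
    obtain ⟨f, hfA, hf⟩ := hsep x y hxy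
    exact ⟨f, ⟨f, hfA, rfl⟩, hf⟩
  have hL : weightedEvalCLM c π = 0 :=
    (weightedEvalCLM c π).eq_zero_of_eqOn_starSubalgebra_separatesPoints A' hA' fun f hf =>
      (weightedEvalCLM_apply hsum π f).trans (hzero f hf)
  refine eq_zero_of_forall_tsum_mul_apply_eq_zero hsum hinj fun f => ?_
  rw [← weightedEvalCLM_apply hsum, hL, zero_apply]

/-- Flath's abstract spectral simplification lemma: an absolutely summable family of complex
coefficients attached to distinct points of a compact Hausdorff space, annihilated by
evaluation against every member of a unital, conjugation-stable, point-separating subalgebra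
of continuous functions, must vanish identically. -/
theorem stmt_13 {R : Type*} [TopologicalSpace R] [CompactSpace R] [T2Space R]
    {J : Type*} [Countable J] (c : J → ℂ)
    (hsum : Summable fun j => ‖c j‖)
    (π : J → R) (hinj : Function.Injective π)
    (A : Subalgebra ℂ C(R, ℂ))
    (hconj : ∀ f ∈ A, star f ∈ A)
    (hsep : ∀ x y : R, x ≠ y → ∃ f ∈ A, f x ≠ f y)
    (hzero : ∀ f ∈ A, ∑' j, c j * f (π j) = 0) :
    ∀ j, c j = 0 :=
  stmt_13_general c hsum π hinj A hconj hsep hzero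
end
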